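/- If A is an R-subalgebra of B, then the relative Lipschitz saturation is idempotent: (A*_{B,R})*_{B,R} = A*_{B,R}. -/

import Mathlib

/-
The kernel of `B ⊗[R] B → B ⊗[A] B` is the ideal generated by the `a ⊗ 1 - 1 ⊗ a` with `a ∈ A`.
So `A ⊆ A*`, whence `A* ⊆ (A*)*`; and the kernel for `A*` is generated by elements integral over
the kernel `I` for `A`, so whatever is integral over the former is integral over `I`. This last
step is transitivity of integral closure of ideals, which reduces to transitivity of integrality
of rings because `x` is integral over `I` iff `x t` is integral over the Rees algebra `⊕ Iⁿ tⁿ`.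
-/

open TensorProduct

/-- Integral closure of an ideal: `x` satisfies an equation of integral dependence over `I`. -/
def Ideal.intClosure {S : Type*} [CommRing S] (I : Ideal S) : Set S :=
  {x | ∃ n : ℕ, 0 < n ∧ ∃ a : ℕ → S, (∀ i ∈ Finset.Icc 1 n, a i ∈ I ^ i) ∧
      x ^ n + ∑ i ∈ Finset.Icc 1 n, a i * x ^ (n - i) = 0}

namespace Ideal

open Polynomial Finset

variable {S : Type*} [CommRing S] {I J : Ideal S} {x : S}

theorem subset_intClosure : (I : Set S) ⊆ I.intClosure := fun x hx =>
  ⟨1, one_pos, fun _ => -x, by simpa using I.neg_mem hx, by simp⟩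

theorem intClosure_mono (h : I ≤ J) : I.intClosure ⊆ J.intClosure :=
  fun _ ⟨n, hn, a, ha, hrel⟩ => ⟨n, hn, a, fun i hi => pow_right_mono h i (ha i hi), hrel⟩

theorem isIntegral_monomial_one_of_mem_intClosure (hx : x ∈ I.intClosure) :
    IsIntegral (reesAlgebra I) (monomial 1 x) := by
  classical
  obtain ⟨n, -, a, ha, hrel⟩ := hx
  let c : ℕ → reesAlgebra I := fun i => if hi : i ∈ Icc 1 n then
    ⟨monomial i (a i), reesAlgebra.monomial_mem.mpr (ha i hi)⟩ else 0
  have hc : ∀ i ∈ Icc 1 n, algebraMap (reesAlgebra I) S[X] (c i) = monomial i (a i) :=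
    fun i hi => by simp only [c, dif_pos hi]; rfl
  -- evaluated at `x t`, this polynomial is `tⁿ` times the equation of integral dependence
  refine ⟨X ^ n + ∑ i ∈ Icc 1 n, C (c i) * X ^ (n - i), monic_X_pow_add ?_, ?_⟩
  · refine (degree_sum_le _ _).trans_lt ((Finset.sup_lt_iff (WithBot.bot_lt_coe n)).mpr ?_)
    intro i hi
    obtain ⟨hi1, hin⟩ := mem_Icc.mp hi
    exact (degree_C_mul_X_pow_le _ _).trans_lt (Nat.cast_lt.mpr (by omega))
  · have hterm : ∀ i ∈ Icc 1 n, eval₂ (algebraMap (reesAlgebra I) S[X]) (monomial 1 x)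
        (C (c i) * X ^ (n - i)) = monomial n (a i * x ^ (n - i)) := fun i hi => by
      rw [eval₂_mul, eval₂_C, eval₂_X_pow, monomial_pow, one_mul, hc i hi, monomial_mul_monomial,
        Nat.add_sub_cancel' (mem_Icc.mp hi).2]
    rw [eval₂_add, eval₂_X_pow, eval₂_finsetSum, sum_congr rfl hterm, monomial_pow, one_mul,
      ← map_sum, ← map_add, hrel, map_zero]

theorem coeff_aeval_monomial_one_natDegree (p : (reesAlgebra I)[X]) (x : S) :
    (aeval (monomial 1 x) p).coeff p.natDegree =
      ∑ i ∈ range (p.natDegree + 1), (p.coeff i : S[X]).coeff (p.natDegree - i) * x ^ i := by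
  rw [aeval_eq_sum_range, finsetSum_coeff]
  refine sum_congr rfl fun i hi => ?_
  rw [monomial_pow, one_mul, Subalgebra.smul_def, smul_eq_mul, ← C_mul_X_pow_eq_monomial,
    ← mul_assoc, coeff_mul_X_pow', if_pos (Nat.lt_succ_iff.mp (mem_range.mp hi)), coeff_mul_C]

theorem mem_intClosure_of_isIntegral_monomial_one
    (hx : IsIntegral (reesAlgebra I) (monomial 1 x)) : x ∈ I.intClosure := by
  obtain ⟨p, hmonic, hp⟩ := hx
  set n := p.natDegree
  -- the coefficient of `tⁿ` in `p(x t) = 0` is the equation of integral dependence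
  have hrel : x ^ n + ∑ j ∈ Icc 1 n,
      (p.coeff (n - j) : S[X]).coeff (n - (n - j)) * x ^ (n - j) = 0 := by
    have hcoeff := coeff_aeval_monomial_one_natDegree p x
    rw [aeval_def, hp, coeff_zero, sum_range_succ, Nat.sub_self, hmonic.coeff_natDegree,
      OneMemClass.coe_one, coeff_one_zero, one_mul] at hcoeff
    rw [← Ico_add_one_right_eq_Icc,
      sum_Ico_reflect (fun i => (p.coeff i : S[X]).coeff (n - i) * x ^ i) 1 le_rfl, Nat.sub_self,
      Nat.add_sub_cancel, ← range_eq_Ico, add_comm, hcoeff]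
  rcases n.eq_zero_or_pos with h0 | hn
  · have : Subsingleton S := subsingleton_of_zero_eq_one (by simpa [h0] using hrel.symm)
    exact ⟨1, one_pos, 0, fun _ _ => zero_mem _, Subsingleton.elim _ _⟩
  · refine ⟨n, hn, _, fun j hj => ?_, hrel⟩
    have hmem := (mem_reesAlgebra_iff I _).mp (p.coeff (n - j)).2 (n - (n - j))
    rwa [Nat.sub_sub_self (mem_Icc.mp hj).2] at hmem ⊢

theorem reesAlgebra_span_le_integralClosure {G : Set S} (hG : G ⊆ I.intClosure) :
    reesAlgebra (span G) ≤ (integralClosure (reesAlgebra I) S[X]).restrictScalars S := by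
  rw [← adjoin_monomial_eq_reesAlgebra, Submodule.map_span, Algebra.adjoin_span,
    Algebra.adjoin_le_iff]
  rintro _ ⟨g, hg, rfl⟩
  exact isIntegral_monomial_one_of_mem_intClosure (hG hg)

theorem intClosure_span_subset {G : Set S} (hG : G ⊆ I.intClosure) :
    (span G).intClosure ⊆ I.intClosure := fun _ hx =>
  mem_intClosure_of_isIntegral_monomial_one <| isIntegral_trans _ <|
    IsIntegral.map_of_comp_eq (T := integralClosure (reesAlgebra I) S[X])
      (Subalgebra.inclusion (reesAlgebra_span_le_integralClosure hG)).toRingHom (RingHom.id _) rfl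
      (isIntegral_monomial_one_of_mem_intClosure hx)

end Ideal

variable (R A B : Type*) [CommRing R] [CommRing A] [CommRing B]
  [Algebra R A] [Algebra R B] [Algebra A B] [IsScalarTower R A B]

/-- The diagonal map `b ↦ b ⊗ 1 - 1 ⊗ b`. -/
noncomputable def lipDelta (b : B) : B ⊗[R] B := b ⊗ₜ[R] 1 - 1 ⊗ₜ[R] b

/-- The canonical morphism `B ⊗[R] B → B ⊗[A] B`. -/
noncomputable def lipPhi : B ⊗[R] B →ₐ[R] B ⊗[A] B :=
  Algebra.TensorProduct.lift
    ((Algebra.TensorProduct.includeLeft : B →ₐ[A] B ⊗[A] B).restrictScalars R)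
    ((Algebra.TensorProduct.includeRight : B →ₐ[A] B ⊗[A] B).restrictScalars R)
    (fun _ _ => Commute.all _ _)

/-- The relative Lipschitz saturation of `A` in `B` over `R`. -/
noncomputable def lipSat : Set B :=
  {x | lipDelta R B x ∈ (RingHom.ker (lipPhi R A B)).intClosure}

section

variable {A}

theorem lipPhi_tmul (a b : B) : lipPhi R A B (a ⊗ₜ[R] b) = a ⊗ₜ[A] b := by
  simp [lipPhi]

theorem lipDelta_algebraMap_mem_ker_lipPhi (a : A) :
    lipDelta R B (algebraMap A B a) ∈ RingHom.ker (lipPhi R A B) := by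
  rw [RingHom.mem_ker, lipDelta, map_sub, lipPhi_tmul, lipPhi_tmul,
    Algebra.algebraMap_eq_smul_one, TensorProduct.smul_tmul, sub_self]

theorem mapOfCompatibleSMul_eq_lipPhi (x : B ⊗[R] B) :
    TensorProduct.mapOfCompatibleSMul A R A B B x = lipPhi R A B x := by
  induction x using TensorProduct.induction_on with
  | zero => simp
  | tmul a b => simp [lipPhi_tmul]
  | add u v hu hv => simp [hu, hv]

theorem ker_lipPhi : RingHom.ker (lipPhi R A B) =
    Ideal.span (lipDelta R B '' Set.range (algebraMap A B)) := by
  set J := Ideal.span (lipDelta R B '' Set.range (algebraMap A B))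
  refine le_antisymm (fun x hx => ?_) (Ideal.span_le.mpr ?_)
  · have hx' : x ∈ LinearMap.ker (TensorProduct.mapOfCompatibleSMul A R A B B) := by
      rwa [LinearMap.mem_ker, mapOfCompatibleSMul_eq_lipPhi, ← RingHom.mem_ker]
    rw [TensorProduct.AlgebraTensorModule.ker_mapOfCompatibleSMul] at hx'
    refine (Submodule.span_le (p := J.restrictScalars A)).mpr ?_ hx'
    rintro _ ⟨a, m, n, rfl⟩
    have hgen : (a • m) ⊗ₜ[R] n - m ⊗ₜ[R] (a • n) =
        (m ⊗ₜ[R] n) * lipDelta R B (algebraMap A B a) := by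
      simp [lipDelta, mul_sub, Algebra.smul_def, mul_comm]
    rw [SetLike.mem_coe, Submodule.restrictScalars_mem, hgen]
    exact J.mul_mem_left _ (Ideal.subset_span ⟨_, ⟨a, rfl⟩, rfl⟩)
  · rintro _ ⟨_, ⟨a, rfl⟩, rfl⟩
    exact lipDelta_algebraMap_mem_ker_lipPhi R B a

theorem range_algebraMap_subset_lipSat : Set.range (algebraMap A B) ⊆ lipSat R A B := by
  rintro _ ⟨a, rfl⟩
  exact Ideal.subset_intClosure (lipDelta_algebraMap_mem_ker_lipPhi R B a)

variable {A' : Type*} [CommRing A'] [Algebra R A'] [Algebra A' B] [IsScalarTower R A' B]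

theorem lipSat_mono (h : Set.range (algebraMap A B) ⊆ Set.range (algebraMap A' B)) :
    lipSat R A B ⊆ lipSat R A' B := by
  refine fun x hx => Ideal.intClosure_mono ?_ hx
  rw [ker_lipPhi, ker_lipPhi]
  exact Ideal.span_mono (Set.image_mono h)

theorem lipSat_subset_of_range_subset_lipSat
    (h : Set.range (algebraMap A' B) ⊆ lipSat R A B) : lipSat R A' B ⊆ lipSat R A B := by
  intro x hx
  replace hx : lipDelta R B x ∈ (RingHom.ker (lipPhi R A' B)).intClosure := hx
  rw [ker_lipPhi] at hx
  refine Ideal.intClosure_span_subset ?_ hx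
  rintro _ ⟨b, hb, rfl⟩
  exact h hb

end

/-- Idempotency of the relative Lipschitz saturation: if `A` is an `R`-subalgebra of
`B` and `S` is the `R`-subalgebra of `B` whose underlying set is `A*_{B,R}`, then
`S*_{B,R} = A*_{B,R}`, i.e. `(A*)* = A*`. -/
theorem lipSat_idem {R' B' : Type*} [CommRing R'] [CommRing B'] [Algebra R' B']
    (A' : Subalgebra R' B') (S : Subalgebra R' B') (hS : (S : Set B') = lipSat R' A' B') :
    lipSat R' S B' = lipSat R' A' B' := by
  have hSsat : Set.range (algebraMap S B') = lipSat R' A' B' :=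
    (Subalgebra.setRange_algebraMap S).trans hS
  have hA : Set.range (algebraMap A' B') ⊆ Set.range (algebraMap S B') :=
    hSsat ▸ range_algebraMap_subset_lipSat R' B'
  exact (lipSat_subset_of_range_subset_lipSat R' B' hSsat.subset).antisymm (lipSat_mono R' B' hA)
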